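/- If a finitely generated group G admits a bi-Lipschitz embedding into L₁ (i.e., there exist f : G → L₁ and c, C > 0 with c·d_G(x,y) ≤ ‖f(x)−f(y)‖₁ ≤ C·d_G(x,y) for all x,y ∈ G), then the wreath product G≀ℤ, with the word metric from its canonical generating set, also admits a bi-Lipschitz embedding into L₁. -/

import Mathlib

open MeasureTheory ENNReal

/-- The word length distance on a group `G` associated to a generating set `S`. -/
noncomputable def wordDist {G : Type*} [Group G] (S : Set G) (x y : G) : ℕ :=
  sInf {n : ℕ | ∃ l : List G, l.length = n ∧ (∀ s ∈ l, s ∈ S) ∧ x⁻¹ * y = l.prod}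

/-- `S` is a symmetric generating set of `G`. -/
def IsSymmGenSet {G : Type*} [Group G] (S : Set G) : Prop :=
  (∀ s ∈ S, s⁻¹ ∈ S) ∧ Subgroup.closure S = ⊤

/-- There is a Lipschitz embedding of `(G, d)` into an `L_p` space with compression `α`. -/
def HasCompressionLp {G : Type*} (p : ℝ≥0∞) (d : G → G → ℕ) (α : ℝ) : Prop :=
  ∃ (Ω : Type) (_ : MeasurableSpace Ω) (μ : Measure Ω) (f : G → Lp ℝ p μ) (c C : ℝ),
    0 < c ∧ 0 < C ∧
      (∀ x y : G, x ≠ y → c * (d x y : ℝ) ^ α ≤ ‖f x - f y‖) ∧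
      (∀ x y : G, ‖f x - f y‖ ≤ C * (d x y : ℝ))

/-- The `L_p` compression exponent `α_p^*` of `(G, d)`; for `p = 2` this is the Hilbert
compression exponent `α^*`. -/
noncomputable def compressionExp {G : Type*} (p : ℝ≥0∞) (d : G → G → ℕ) : ℝ :=
  sSup {α : ℝ | 0 ≤ α ∧ HasCompressionLp p d α}
/-- The (restricted) wreath product `G ≀ H`: pairs `(f, x)` of a finitely supported function
`f : H → G` and an element `x ∈ H`, with product `(f,x)(g,y) = (z ↦ f(z)g(x⁻¹z), xy)`. -/
@[ext]
structure Wreath (G H : Type*) [One G] where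
  toFun : H → G
  pos : H
  finsupp : (Function.mulSupport toFun).Finite

namespace Wreath

variable {G H : Type*} [Group G] [Group H]

instance : One (Wreath G H) :=
  ⟨⟨fun _ => 1, 1, by
    have : Function.mulSupport (fun _ : H => (1 : G)) = ∅ :=
      Function.mulSupport_eq_empty_iff.mpr rfl
    rw [this]; exact Set.finite_empty⟩⟩

instance : Mul (Wreath G H) :=
  ⟨fun a b =>
    ⟨fun z => a.toFun z * b.toFun (a.pos⁻¹ * z), a.pos * b.pos, by
      have h2 : (Function.mulSupport fun z => b.toFun (a.pos⁻¹ * z)).Finite := by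
        have : (Function.mulSupport fun z => b.toFun (a.pos⁻¹ * z)) =
            (fun z : H => a.pos⁻¹ * z) ⁻¹' Function.mulSupport b.toFun :=
          Function.mulSupport_comp_eq_preimage _ _
        rw [this]
        exact b.finsupp.preimage (mul_right_injective a.pos⁻¹).injOn
      exact (a.finsupp.union h2).subset (Function.mulSupport_mul _ _)⟩⟩

instance : Inv (Wreath G H) :=
  ⟨fun a =>
    ⟨fun z => (a.toFun (a.pos * z))⁻¹, a.pos⁻¹, by
      have : (Function.mulSupport fun z => (a.toFun (a.pos * z))⁻¹) =
          (fun z : H => a.pos * z) ⁻¹' Function.mulSupport a.toFun := by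
        change Function.mulSupport (fun z => a.toFun (a.pos * z))⁻¹ = _
        rw [Function.mulSupport_inv]
        exact Function.mulSupport_comp_eq_preimage _ _
      rw [this]
      exact a.finsupp.preimage (mul_right_injective a.pos).injOn⟩⟩

@[simp] lemma mul_toFun (a b : Wreath G H) :
    (a * b).toFun = fun z => a.toFun z * b.toFun (a.pos⁻¹ * z) := rfl

@[simp] lemma mul_pos' (a b : Wreath G H) : (a * b).pos = a.pos * b.pos := rfl

@[simp] lemma one_toFun : (1 : Wreath G H).toFun = fun _ => (1 : G) := rfl

@[simp] lemma one_pos' : (1 : Wreath G H).pos = (1 : H) := rfl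

@[simp] lemma inv_toFun (a : Wreath G H) :
    (a⁻¹).toFun = fun z => (a.toFun (a.pos * z))⁻¹ := rfl

@[simp] lemma inv_pos' (a : Wreath G H) : (a⁻¹).pos = a.pos⁻¹ := rfl

instance : Group (Wreath G H) where
  mul_assoc a b c := by
    refine Wreath.ext ?_ ?_
    · funext z; simp [mul_assoc, mul_inv_rev]
    · simp [mul_assoc]
  one_mul a := by
    refine Wreath.ext ?_ ?_
    · funext z; simp
    · simp
  mul_one a := by
    refine Wreath.ext ?_ ?_
    · funext z; simp
    · simp
  inv_mul_cancel a := by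
    refine Wreath.ext ?_ ?_
    · funext z; simp
    · simp

end Wreath

open Classical in
/-- The canonical generating set of the wreath product `G ≀ H` associated with a generating
set `S` of `G` and a generating set `T` of `H`: the elements `(𝟙, t)` for `t ∈ T` and
`(δ_s, e_H)` for `s ∈ S`, where `δ_s` takes the value `s` at `e_H` and `e_G` elsewhere. -/
noncomputable def wreathGens {G H : Type*} [Group G] [Group H] (S : Set G) (T : Set H) :
    Set (Wreath G H) :=
  {w | w.toFun = (fun _ => 1) ∧ w.pos ∈ T} ∪
    {w | w.pos = 1 ∧ ∃ s ∈ S, w.toFun = fun z => if z = 1 then s else 1}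

/-- The generating set `{±1}` of the (multiplicative) group of integers. -/
def zGens : Set (Multiplicative ℤ) :=
  {Multiplicative.ofAdd 1, Multiplicative.ofAdd (-1)}

/-!
Picture `w ∈ G ≀ ℤ` as a lamplighter standing at `w.cursor` with lamps `w.lampAt z ∈ G`.
Three quantities control the word distance between `u` and `v` up to constants:
`rightDist u v`, the number of sites `t` at which `u` and `v` look different to the right
(exactly one lamplighter stands at or left of `t`, or both do and some lamp beyond `t` differs);
its mirror image `leftDist u v`; and `lampDist u v = ∑_z d_G(u_z, v_z)`. Each of them changes by
at most one per generator, so it is at most the word distance. Conversely, walking left past all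
lamps where `u⁻¹v` is nontrivial, sweeping right while setting them, and walking back gives a word
of length at most `7 (rightDist + leftDist + lampDist)`.

Each quantity is an `ℓ¹`-distance: sending `u` to the Dirac masses at its profiles to the right of
every `t` realises `2 rightDist`, and similarly for `leftDist`, while the given embedding `f` of
`G` applied lampwise realises `∑_z ‖f(u_z) - f(v_z)‖₁`, which is comparable to `lampDist`. The
`ℓ¹`-sum of these maps is the required bi-Lipschitz embedding of `G ≀ ℤ`.
-/

/-! ### Word metrics -/

section WordMetric

variable {Γ Δ : Type*} [Group Γ] [Group Δ] {S : Set Γ}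

def WordLengthLE (S : Set Γ) (x : Γ) (n : ℕ) : Prop :=
  ∃ l : List Γ, (∀ s ∈ l, s ∈ S) ∧ l.prod = x ∧ l.length ≤ n

namespace WordLengthLE

variable {x y : Γ} {m n : ℕ}

lemma one : WordLengthLE S 1 0 := ⟨[], by simp, rfl, le_rfl⟩

lemma of_mem {s : Γ} (hs : s ∈ S) : WordLengthLE S s 1 := ⟨[s], by simpa, by simp, le_rfl⟩

lemma mono (h : WordLengthLE S x m) (hmn : m ≤ n) : WordLengthLE S x n :=
  let ⟨l, hl, hx, hlen⟩ := h
  ⟨l, hl, hx, hlen.trans hmn⟩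

lemma mul (hx : WordLengthLE S x m) (hy : WordLengthLE S y n) : WordLengthLE S (x * y) (m + n) := by
  obtain ⟨l₁, hl₁, rfl, hlen₁⟩ := hx
  obtain ⟨l₂, hl₂, rfl, hlen₂⟩ := hy
  refine ⟨l₁ ++ l₂, fun s hs => ?_, List.prod_append, by rw [List.length_append]; omega⟩
  rcases List.mem_append.mp hs with hs | hs
  exacts [hl₁ s hs, hl₂ s hs]

lemma map (φ : Γ →* Δ) {T : Set Δ} (hφ : ∀ s ∈ S, φ s ∈ T) (h : WordLengthLE S x n) :
    WordLengthLE T (φ x) n := by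
  obtain ⟨l, hl, rfl, hlen⟩ := h
  refine ⟨l.map φ, ?_, (map_list_prod φ l).symm, by simpa⟩
  simp only [List.mem_map, forall_exists_index, and_imp]
  rintro _ s hs rfl
  exact hφ s (hl s hs)

lemma mem_closure (h : WordLengthLE S x n) : x ∈ Submonoid.closure S := by
  obtain ⟨l, hl, rfl, -⟩ := h
  exact Submonoid.list_prod_mem _ fun s hs => Submonoid.subset_closure (hl s hs)

lemma eq_one (h : WordLengthLE S x 0) : x = 1 := by
  obtain ⟨l, -, rfl, hlen⟩ := h
  simp [List.length_eq_zero_iff.mp (Nat.le_zero.mp hlen)]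

end WordLengthLE

lemma exists_wordLengthLE (hS : Submonoid.closure S = ⊤) (x : Γ) : ∃ n, WordLengthLE S x n := by
  obtain ⟨l, hl, hx⟩ := Submonoid.exists_list_of_mem_closure (hS ▸ Submonoid.mem_top x)
  exact ⟨l.length, l, hl, hx, le_rfl⟩

lemma wordDist_le {x y : Γ} {n : ℕ} (h : WordLengthLE S (x⁻¹ * y) n) : wordDist S x y ≤ n := by
  obtain ⟨l, hl, hx, hlen⟩ := h
  exact (Nat.sInf_le (⟨l, rfl, hl, hx.symm⟩ : l.length ∈ {n : ℕ | ∃ l : List Γ,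
    l.length = n ∧ (∀ s ∈ l, s ∈ S) ∧ x⁻¹ * y = l.prod})).trans hlen

lemma wordLengthLE_wordDist (hS : Submonoid.closure S = ⊤) (x y : Γ) :
    WordLengthLE S (x⁻¹ * y) (wordDist S x y) := by
  obtain ⟨n, l, hl, hx, -⟩ := exists_wordLengthLE hS (x⁻¹ * y)
  have hne : {n : ℕ | ∃ l : List Γ, l.length = n ∧ (∀ s ∈ l, s ∈ S) ∧ x⁻¹ * y = l.prod}.Nonempty :=
    ⟨_, l, rfl, hl, hx.symm⟩
  obtain ⟨l', hlen, hl', hx'⟩ := Nat.sInf_mem hne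
  exact ⟨l', hl', hx'.symm, hlen.le⟩

@[simp] lemma wordDist_self (x : Γ) : wordDist S x x = 0 :=
  Nat.le_zero.mp <| wordDist_le <| by simpa using WordLengthLE.one

lemma wordDist_mul_left (g x y : Γ) : wordDist S (g * x) (g * y) = wordDist S x y := by
  simp [wordDist, mul_inv_rev, mul_assoc]

lemma eq_of_wordDist_eq_zero (hS : Submonoid.closure S = ⊤) {x y : Γ}
    (h : wordDist S x y = 0) : x = y :=
  inv_mul_eq_one.mp (h ▸ wordLengthLE_wordDist hS x y).eq_one

lemma wordDist_mul_le (hS : Submonoid.closure S = ⊤) (x y : Γ) {s : Γ} (hs : s ∈ S) :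
    wordDist S x (y * s) ≤ wordDist S x y + 1 :=
  wordDist_le <| by
    simpa [mul_assoc] using (wordLengthLE_wordDist hS x y).mul (WordLengthLE.of_mem hs)

lemma WordLengthLE.le_of_lipschitz (φ : Γ → ℕ) (hφ : ∀ v, ∀ s ∈ S, φ (v * s) ≤ φ v + 1)
    {w : Γ} {n : ℕ} (h : WordLengthLE S w n) (x : Γ) : φ (x * w) ≤ φ x + n := by
  obtain ⟨l, hl, rfl, hlen⟩ := h
  induction l generalizing x n with
  | nil => simp
  | cons s l ih =>
    have := ih (x * s) (fun t ht => hl t (List.mem_cons_of_mem s ht)) le_rfl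
    have := hφ x s (hl s List.mem_cons_self)
    simp only [List.prod_cons, List.length_cons, ← mul_assoc] at *
    omega

lemma le_wordDist_of_lipschitz (hS : Submonoid.closure S = ⊤) (φ : Γ → ℕ)
    (hφ : ∀ v, ∀ s ∈ S, φ (v * s) ≤ φ v + 1) (x y : Γ) : φ y ≤ φ x + wordDist S x y := by
  simpa using (wordLengthLE_wordDist hS x y).le_of_lipschitz φ hφ x

lemma IsSymmGenSet.closure_eq_top {S : Set Γ} (hS : IsSymmGenSet S) :
    Submonoid.closure S = ⊤ := by
  have hinv : S ∪ S⁻¹ = S := Set.union_eq_left.mpr fun s hs => by simpa using hS.1 _ hs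
  rw [← hinv, ← Subgroup.closure_toSubmonoid, hS.2, Subgroup.top_toSubmonoid]

lemma countable_of_closure_eq_top {S : Set Γ} [Countable S] (hS : Submonoid.closure S = ⊤) :
    Countable Γ := by
  refine Function.Surjective.countable (f := fun l : List S => (l.map Subtype.val).prod) ?_
  intro x
  obtain ⟨l, hl, rfl⟩ := Submonoid.exists_list_of_mem_closure (hS ▸ Submonoid.mem_top x)
  lift l to List S using hl
  exact ⟨l, rfl⟩

end WordMetric

/-! ### Distances realised in `L¹` -/

lemma measurableEmbedding_sigmaMk {ι : Type*} {Ω : ι → Type*} [∀ i, MeasurableSpace (Ω i)]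
    (i : ι) : MeasurableEmbedding (Sigma.mk i : Ω i → Σ i, Ω i) where
  injective := sigma_mk_injective
  measurable _ hs := MeasurableSpace.measurableSet_iInf.mp hs i
  measurableSet_image' t ht := MeasurableSpace.measurableSet_iInf.mpr fun j => by
    rw [MeasurableSpace.map_def]
    by_cases h : j = i
    · subst h
      rwa [Set.preimage_image_eq _ sigma_mk_injective]
    · convert MeasurableSet.empty
      ext ω
      simp [Ne.symm h]

lemma MeasureTheory.Lp.lintegral_enorm_sub {Ω E : Type*} [MeasurableSpace Ω] {μ : Measure Ω}
    [NormedAddCommGroup E] (f g : Lp E 1 μ) : ∫⁻ ω, ‖f ω - g ω‖ₑ ∂μ = ‖f - g‖ₑ := by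
  rw [Lp.enorm_def, eLpNorm_one_eq_lintegral_enorm]
  exact lintegral_congr_ae ((Lp.coeFn_sub f g).mono fun ω h => by simp only [h, Pi.sub_apply])

def IsL1Embeddable {X : Type*} (d : X → X → ℝ≥0∞) : Prop :=
  ∃ (Ω : Type) (_ : MeasurableSpace Ω) (μ : Measure Ω) (F : X → Lp ℝ 1 μ),
    ∀ x y, ‖F x - F y‖ₑ = d x y

namespace IsL1Embeddable

variable {X Y : Type*} {d d' : X → X → ℝ≥0∞}

lemma of_lp {Ω : Type} [MeasurableSpace Ω] {μ : Measure Ω} (F : X → Lp ℝ 1 μ) :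
    IsL1Embeddable fun x y => ‖F x - F y‖ₑ :=
  ⟨Ω, _, μ, F, fun _ _ => rfl⟩

lemma comp (h : IsL1Embeddable d) (φ : Y → X) : IsL1Embeddable fun x y => d (φ x) (φ y) :=
  let ⟨Ω, m, μ, F, hF⟩ := h
  ⟨Ω, m, μ, F ∘ φ, fun _ _ => hF _ _⟩

lemma ne_top (h : IsL1Embeddable d) (x y : X) : d x y ≠ ∞ := by
  obtain ⟨Ω, m, μ, F, hF⟩ := h
  exact hF x y ▸ enorm_ne_top

lemma tsum {ι : Type} [Countable ι] {d : ι → X → X → ℝ≥0∞} (hd : ∀ i, IsL1Embeddable (d i))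
    (hfin : ∀ x y, ∑' i, d i x y ≠ ∞) : IsL1Embeddable fun x y => ∑' i, d i x y := by
  choose Ω m μ F hF using hd
  rcases isEmpty_or_nonempty X with hX | ⟨⟨x₀⟩⟩
  · exact ⟨Unit, ⊤, 0, isEmptyElim, isEmptyElim⟩
  let ν : Measure (Σ i, Ω i) := Measure.sum fun i => (μ i).map (Sigma.mk i)
  -- centring at `x₀` makes every `g x` integrable
  let g : X → (Σ i, Ω i) → ℝ := fun x p => F p.1 x p.2 - F p.1 x₀ p.2
  have hdist : ∀ x y, ∫⁻ p, ‖g x p - g y p‖ₑ ∂ν = ∑' i, d i x y := fun x y => by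
    rw [lintegral_sum_measure]
    refine tsum_congr fun i => ?_
    rw [(measurableEmbedding_sigmaMk i).lintegral_map, ← hF i x y, ← Lp.lintegral_enorm_sub]
    simp [g]
  have hmem : ∀ x, MemLp (g x) 1 ν := fun x => by
    refine ⟨aestronglyMeasurable_sum_measure_iff.mpr fun i =>
      (measurableEmbedding_sigmaMk i).aestronglyMeasurable_map_iff.mpr
        ((Lp.aestronglyMeasurable (F i x)).sub (Lp.aestronglyMeasurable (F i x₀))), ?_⟩
    have h := (hfin x x₀).lt_top
    rw [← hdist x x₀] at h
    simpa [eLpNorm_one_eq_lintegral_enorm, g] using h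
  refine ⟨Σ i, Ω i, inferInstance, ν, fun x => (hmem x).toLp, fun x y => ?_⟩
  rw [← MemLp.toLp_sub, Lp.enorm_toLp, eLpNorm_one_eq_lintegral_enorm]
  exact hdist x y

lemma add (h : IsL1Embeddable d) (h' : IsL1Embeddable d') :
    IsL1Embeddable fun x y => d x y + d' x y := by
  simpa [tsum_bool, add_comm] using IsL1Embeddable.tsum (d := fun b => bif b then d else d')
    (fun b => by cases b <;> assumption) fun x y => by simp [h.ne_top, h'.ne_top]

end IsL1Embeddable

/-- Points of `Y` embed as Dirac masses in `ℓ¹(Y)`. -/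
lemma isL1Embeddable_discrete {X : Type*} {Y : Type} [DecidableEq Y] (φ : X → Y) :
    IsL1Embeddable fun x y => if φ x = φ y then 0 else 2 := by
  let _ : MeasurableSpace Y := ⊤
  have hmem : ∀ a : Y, MemLp (({a} : Set Y).indicator fun _ => (1 : ℝ)) 1 Measure.count :=
    fun a => memLp_indicator_const 1 MeasurableSpace.measurableSet_top 1
      (.inr (by simp [Measure.count_singleton']))
  refine ⟨Y, ⊤, Measure.count, fun x => (hmem (φ x)).toLp, fun x y => ?_⟩
  rw [← MemLp.toLp_sub, Lp.enorm_toLp, eLpNorm_one_eq_lintegral_enorm,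
    lintegral_count' measurable_from_top]
  simp only [Pi.sub_apply]
  split_ifs with h
  · simp [h]
  · have : ∀ z, ‖({φ x} : Set Y).indicator (fun _ => (1 : ℝ)) z -
        ({φ y} : Set Y).indicator (fun _ => (1 : ℝ)) z‖ₑ =
        (if z = φ x then 1 else 0) + (if z = φ y then 1 else 0) := fun z => by
      by_cases hx : z = φ x <;> by_cases hy : z = φ y <;> simp_all [Set.indicator]
    rw [tsum_congr this, ENNReal.tsum_add, tsum_ite_eq, tsum_ite_eq, one_add_one_eq_two]

/-! ### The wreath product `G ≀ ℤ` -/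

lemma Set.ncard_setOf_ne_le_succ {ι : Type*} {α : ι → Type*} {f g g' : ∀ i, α i} (i₀ : ι)
    (hg : ∀ i ≠ i₀, g' i = g i) (hfin : {i | f i ≠ g i}.Finite) :
    {i | f i ≠ g' i}.ncard ≤ {i | f i ≠ g i}.ncard + 1 := by
  have hsub : {i | f i ≠ g' i} ⊆ insert i₀ {i | f i ≠ g i} := fun i hi => by
    by_cases h : i = i₀
    exacts [.inl h, .inr fun hfg => hi (hfg.trans (hg i h).symm)]
  exact (Set.ncard_le_ncard hsub (hfin.insert i₀)).trans (Set.ncard_insert_le _ _)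

lemma Set.ncard_Ico_int (a b : ℤ) : (Set.Ico a b).ncard = (b - a).toNat := by
  rw [← Finset.coe_Ico, Set.ncard_coe_finset, Int.card_Ico]

namespace Wreath

section General

variable {G H : Type*} [Group G] [Group H]

def ofPos : H →* Wreath G H where
  toFun h := ⟨fun _ => 1, h, by simp⟩
  map_one' := rfl
  map_mul' _ _ := by ext <;> simp

@[simp] lemma ofPos_toFun (h : H) : (ofPos h : Wreath G H).toFun = fun _ => 1 := rfl

@[simp] lemma ofPos_pos (h : H) : (ofPos h : Wreath G H).pos = h := rfl

open Classical in
noncomputable def lamp : G →* Wreath G H where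
  toFun s := ⟨fun z => if z = 1 then s else 1, 1,
    (Set.finite_singleton 1).subset fun z hz => by_contra fun h => hz (if_neg h)⟩
  map_one' := by ext <;> simp
  map_mul' a b := by
    refine Wreath.ext (funext fun z => ?_) (mul_one 1).symm
    by_cases hz : z = 1 <;> simp [hz]

open Classical in
@[simp] lemma lamp_toFun (s : G) :
    (lamp s : Wreath G H).toFun = fun z => if z = 1 then s else 1 := rfl

@[simp] lemma lamp_pos (s : G) : (lamp s : Wreath G H).pos = 1 := rfl

lemma mem_wreathGens_iff {S : Set G} {T : Set H} {σ : Wreath G H} :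
    σ ∈ wreathGens S T ↔ (∃ t ∈ T, σ = ofPos t) ∨ ∃ s ∈ S, σ = lamp s := by
  constructor
  · rintro (⟨hf, ht⟩ | ⟨hp, s, hs, hf⟩)
    exacts [.inl ⟨_, ht, Wreath.ext hf rfl⟩, .inr ⟨s, hs, Wreath.ext hf hp⟩]
  · rintro (⟨t, ht, rfl⟩ | ⟨s, hs, rfl⟩)
    exacts [.inl ⟨rfl, ht⟩, .inr ⟨rfl, s, hs, rfl⟩]

end General

section Reflect

variable {G H : Type*} [Group G] [CommGroup H]

def reflect : Wreath G H ≃* Wreath G H where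
  toFun w := ⟨fun z => w.toFun z⁻¹, w.pos⁻¹, by
    simpa [Function.mulSupport] using w.finsupp.preimage inv_injective.injOn⟩
  invFun w := ⟨fun z => w.toFun z⁻¹, w.pos⁻¹, by
    simpa [Function.mulSupport] using w.finsupp.preimage inv_injective.injOn⟩
  left_inv w := by ext <;> simp
  right_inv w := by ext <;> simp
  map_mul' a b := by ext z <;> simp [mul_comm]

@[simp] lemma reflect_toFun (w : Wreath G H) : (reflect w).toFun = fun z => w.toFun z⁻¹ := rfl

@[simp] lemma reflect_pos (w : Wreath G H) : (reflect w).pos = w.pos⁻¹ := rfl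

lemma reflect_mem_wreathGens {S : Set G} {T : Set H} (hT : ∀ t ∈ T, t⁻¹ ∈ T)
    {σ : Wreath G H} (hσ : σ ∈ wreathGens S T) : reflect σ ∈ wreathGens S T := by
  rcases mem_wreathGens_iff.mp hσ with ⟨t, ht, rfl⟩ | ⟨s, hs, rfl⟩
  · exact .inl ⟨rfl, hT t ht⟩
  · refine .inr ⟨inv_one, s, hs, funext fun z => ?_⟩
    simp only [reflect_toFun, lamp_toFun]
    split_ifs <;> simp_all

end Reflect

variable {G : Type*} [Group G] {S : Set G}

open Multiplicative

def cursor (w : Wreath G (Multiplicative ℤ)) : ℤ := toAdd w.pos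

def lampAt (w : Wreath G (Multiplicative ℤ)) (z : ℤ) : G := w.toFun (ofAdd z)

@[simp] lemma cursor_mul (a b : Wreath G (Multiplicative ℤ)) :
    (a * b).cursor = a.cursor + b.cursor := rfl

@[simp] lemma lampAt_mul (a b : Wreath G (Multiplicative ℤ)) (z : ℤ) :
    (a * b).lampAt z = a.lampAt z * b.lampAt (z - a.cursor) := by
  simp [lampAt, cursor, sub_eq_neg_add]

@[simp] lemma cursor_one : (1 : Wreath G (Multiplicative ℤ)).cursor = 0 := rfl

@[simp] lemma lampAt_one (z : ℤ) : (1 : Wreath G (Multiplicative ℤ)).lampAt z = 1 := rfl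

@[simp] lemma cursor_ofPos (k : ℤ) : (ofPos (ofAdd k) : Wreath G (Multiplicative ℤ)).cursor = k :=
  rfl

@[simp] lemma lampAt_ofPos (k z : ℤ) :
    (ofPos (ofAdd k) : Wreath G (Multiplicative ℤ)).lampAt z = 1 := rfl

@[simp] lemma cursor_lamp (s : G) : (lamp s : Wreath G (Multiplicative ℤ)).cursor = 0 := rfl

@[simp] lemma lampAt_lamp (s : G) (z : ℤ) :
    (lamp s : Wreath G (Multiplicative ℤ)).lampAt z = if z = 0 then s else 1 := by
  simp only [lampAt, lamp_toFun]
  split_ifs <;> simp_all [← toAdd_eq_zero]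

@[simp] lemma cursor_reflect (w : Wreath G (Multiplicative ℤ)) :
    (reflect w).cursor = -w.cursor := rfl

@[simp] lemma lampAt_reflect (w : Wreath G (Multiplicative ℤ)) (z : ℤ) :
    (reflect w).lampAt z = w.lampAt (-z) := rfl

lemma lampAt_mul_ofPos (v : Wreath G (Multiplicative ℤ)) (h : Multiplicative ℤ) (z : ℤ) :
    (v * ofPos h).lampAt z = v.lampAt z := mul_one _

lemma lampAt_mul_lamp (v : Wreath G (Multiplicative ℤ)) (s : G) (z : ℤ) :
    (v * lamp s).lampAt z = if z = v.cursor then v.lampAt z * s else v.lampAt z := by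
  by_cases hz : z = v.cursor <;> simp [hz, sub_eq_zero]

lemma ext_lampAt {a b : Wreath G (Multiplicative ℤ)} (hlamp : ∀ z, a.lampAt z = b.lampAt z)
    (hcursor : a.cursor = b.cursor) : a = b :=
  Wreath.ext (funext fun z => hlamp (toAdd z)) hcursor

lemma finite_setOf_lampAt_ne (u v : Wreath G (Multiplicative ℤ)) :
    {z | u.lampAt z ≠ v.lampAt z}.Finite := by
  refine ((u.finsupp.union v.finsupp).preimage ofAdd.injective.injOn).subset fun z hz => ?_
  by_contra h
  simp only [Set.mem_preimage, Set.mem_union, Function.mem_mulSupport, not_or, not_not] at h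
  exact hz (h.1.trans h.2.symm)

lemma mem_wreathGens_zGens_iff {σ : Wreath G (Multiplicative ℤ)} :
    σ ∈ wreathGens S zGens ↔
      σ = ofPos (ofAdd 1) ∨ σ = ofPos (ofAdd (-1)) ∨ ∃ s ∈ S, σ = lamp s := by
  simp [mem_wreathGens_iff, zGens, or_assoc]

lemma zGens_inv_mem : ∀ t ∈ zGens, t⁻¹ ∈ zGens := by
  simp [zGens, or_comm, ← ofAdd_neg]

def rightProfile (t : ℤ) (w : Wreath G (Multiplicative ℤ)) : Option (Set.Ioi t → G) :=
  if w.cursor ≤ t then some fun z => w.lampAt z else none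

lemma rightProfile_eq_iff {t : ℤ} {u v : Wreath G (Multiplicative ℤ)} :
    rightProfile t u = rightProfile t v ↔
      (u.cursor ≤ t ↔ v.cursor ≤ t) ∧ (u.cursor ≤ t → ∀ z, t < z → u.lampAt z = v.lampAt z) := by
  unfold rightProfile
  split_ifs with hu hv hv <;> simp [hu, hv, funext_iff]

def rightDiff (u v : Wreath G (Multiplicative ℤ)) : Set ℤ :=
  {t | rightProfile t u ≠ rightProfile t v}

lemma rightDiff_finite (u v : Wreath G (Multiplicative ℤ)) : (rightDiff u v).Finite := by
  set m := min u.cursor v.cursor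
  refine (((finite_setOf_lampAt_ne u v).insert (max u.cursor v.cursor)).biUnion
    fun z _ => Set.finite_Ico m z).subset fun t ht => ?_
  replace ht : ¬((u.cursor ≤ t ↔ v.cursor ≤ t) ∧
      (u.cursor ≤ t → ∀ z, t < z → u.lampAt z = v.lampAt z)) := fun h =>
    ht (rightProfile_eq_iff.mpr h)
  simp only [Set.mem_iUnion, Set.mem_insert_iff, Set.mem_Ico, exists_prop]
  by_cases hc : u.cursor ≤ t ↔ v.cursor ≤ t
  · push Not at ht
    obtain ⟨hu, z, htz, hz⟩ := ht hc
    exact ⟨z, .inr hz, by omega, htz⟩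
  · exact ⟨_, .inl rfl, by omega⟩

noncomputable def rightDist (u v : Wreath G (Multiplicative ℤ)) : ℕ := (rightDiff u v).ncard

noncomputable def leftDist (u v : Wreath G (Multiplicative ℤ)) : ℕ :=
  rightDist (reflect u) (reflect v)

noncomputable def lampDist (S : Set G) (u v : Wreath G (Multiplicative ℤ)) : ℕ :=
  ∑ᶠ z, wordDist S (u.lampAt z) (v.lampAt z)

@[simp] lemma rightDist_self (u : Wreath G (Multiplicative ℤ)) : rightDist u u = 0 := by
  simp [rightDist, rightDiff]

@[simp] lemma leftDist_self (u : Wreath G (Multiplicative ℤ)) : leftDist u u = 0 :=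
  rightDist_self _

@[simp] lemma lampDist_self (u : Wreath G (Multiplicative ℤ)) : lampDist S u u = 0 := by
  simp [lampDist]

lemma finsum_lampAt_eq_sum {M : Type*} [AddCommMonoid M] (φ : G → G → M) (hφ : ∀ x, φ x x = 0)
    {u v : Wreath G (Multiplicative ℤ)} {T : Finset ℤ}
    (hT : ∀ z, u.lampAt z ≠ v.lampAt z → z ∈ T) :
    ∑ᶠ z, φ (u.lampAt z) (v.lampAt z) = ∑ z ∈ T, φ (u.lampAt z) (v.lampAt z) :=
  finsum_eq_sum_of_support_subset _ fun z hz => hT z fun h => hz (by simp [h, hφ])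

lemma rightProfile_mul_ofPos {t k : ℤ} {v : Wreath G (Multiplicative ℤ)}
    (h : v.cursor ≤ t ↔ v.cursor + k ≤ t) :
    rightProfile t (v * ofPos (ofAdd k)) = rightProfile t v := by
  simp [rightProfile_eq_iff, h]

lemma rightProfile_mul_lamp (t : ℤ) (v : Wreath G (Multiplicative ℤ)) (s : G) :
    rightProfile t (v * lamp s) = rightProfile t v := by
  refine rightProfile_eq_iff.mpr ⟨by simp, fun hc z hz => ?_⟩
  rw [lampAt_mul_lamp, if_neg (by simp at hc; omega)]

lemma rightDist_mul_le {σ : Wreath G (Multiplicative ℤ)} (hσ : σ ∈ wreathGens S zGens)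
    (u v : Wreath G (Multiplicative ℤ)) : rightDist u (v * σ) ≤ rightDist u v + 1 := by
  obtain ⟨t₀, ht₀⟩ : ∃ t₀, ∀ t ≠ t₀, rightProfile t (v * σ) = rightProfile t v := by
    rcases mem_wreathGens_zGens_iff.mp hσ with rfl | rfl | ⟨s, -, rfl⟩
    · exact ⟨v.cursor, fun t ht => rightProfile_mul_ofPos (by omega)⟩
    · exact ⟨v.cursor - 1, fun t ht => rightProfile_mul_ofPos (by omega)⟩
    · exact ⟨0, fun t _ => rightProfile_mul_lamp t v s⟩
  exact Set.ncard_setOf_ne_le_succ (f := fun t => rightProfile t u) t₀ ht₀ (rightDiff_finite u v)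

lemma leftDist_mul_le {σ : Wreath G (Multiplicative ℤ)} (hσ : σ ∈ wreathGens S zGens)
    (u v : Wreath G (Multiplicative ℤ)) : leftDist u (v * σ) ≤ leftDist u v + 1 := by
  simpa [leftDist] using
    rightDist_mul_le (reflect_mem_wreathGens zGens_inv_mem hσ) (reflect u) (reflect v)

lemma lampDist_mul_le (hS : Submonoid.closure S = ⊤) {σ : Wreath G (Multiplicative ℤ)}
    (hσ : σ ∈ wreathGens S zGens) (u v : Wreath G (Multiplicative ℤ)) :
    lampDist S u (v * σ) ≤ lampDist S u v + 1 := by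
  obtain ⟨k, -, rfl⟩ | ⟨s, hs, rfl⟩ := mem_wreathGens_iff.mp hσ
  · simp only [lampDist, lampAt_mul_ofPos]
    omega
  classical
  set T := insert v.cursor (finite_setOf_lampAt_ne u v).toFinset
  have hT : ∀ z, u.lampAt z ≠ v.lampAt z → z ∈ T := fun z hz =>
    Finset.mem_insert_of_mem (by simpa using hz)
  have hT' : ∀ z, u.lampAt z ≠ (v * lamp s).lampAt z → z ∈ T := fun z hz => by
    by_cases h : z = v.cursor
    · exact h ▸ Finset.mem_insert_self _ _
    · exact hT z (by rwa [lampAt_mul_lamp, if_neg h] at hz)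
  rw [lampDist, lampDist, finsum_lampAt_eq_sum _ wordDist_self hT,
    finsum_lampAt_eq_sum _ wordDist_self hT']
  calc ∑ z ∈ T, wordDist S (u.lampAt z) ((v * lamp s).lampAt z)
      ≤ ∑ z ∈ T, (wordDist S (u.lampAt z) (v.lampAt z) + if v.cursor = z then 1 else 0) := by
        refine Finset.sum_le_sum fun z _ => ?_
        rw [lampAt_mul_lamp]
        by_cases h : z = v.cursor
        · subst h
          simpa using wordDist_mul_le hS _ _ hs
        · simp [h, Ne.symm h]
    _ = ∑ z ∈ T, wordDist S (u.lampAt z) (v.lampAt z) + 1 := by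
        rw [Finset.sum_add_distrib, Finset.sum_ite_eq, if_pos (Finset.mem_insert_self _ _)]

lemma rightProfile_mul_left_eq_iff (g u v : Wreath G (Multiplicative ℤ)) (t : ℤ) :
    rightProfile t (g * u) = rightProfile t (g * v) ↔
      rightProfile (t - g.cursor) u = rightProfile (t - g.cursor) v := by
  simp only [rightProfile_eq_iff, cursor_mul, lampAt_mul, mul_right_inj]
  refine and_congr (by omega) (imp_congr (by omega)
    ⟨fun h z hz => by simpa using h (z + g.cursor) (by omega), fun h z hz => h _ (by omega)⟩)

lemma rightDist_mul_left (g u v : Wreath G (Multiplicative ℤ)) :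
    rightDist (g * u) (g * v) = rightDist u v := by
  have : rightDiff (g * u) (g * v) = (· - g.cursor) ⁻¹' rightDiff u v := by
    ext t
    simp [rightDiff, rightProfile_mul_left_eq_iff]
  rw [rightDist, this, Set.ncard_preimage_of_injective_subset_range (sub_left_injective)
    fun t _ => ⟨t + g.cursor, by simp⟩, rightDist]

lemma leftDist_mul_left (g u v : Wreath G (Multiplicative ℤ)) :
    leftDist (g * u) (g * v) = leftDist u v := by
  simp [leftDist, rightDist_mul_left]

lemma lampDist_mul_left (g u v : Wreath G (Multiplicative ℤ)) :
    lampDist S (g * u) (g * v) = lampDist S u v := by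
  simp only [lampDist, lampAt_mul, wordDist_mul_left]
  exact finsum_comp_equiv (Equiv.subRight g.cursor)
    (f := fun z => wordDist S (u.lampAt z) (v.lampAt z))

noncomputable def sweep (f : ℤ → G) : ℤ → ℕ → Wreath G (Multiplicative ℤ)
  | _, 0 => 1
  | c, k + 1 => lamp (f c) * ofPos (ofAdd 1) * sweep f (c + 1) k

lemma cursor_sweep (f : ℤ → G) (c : ℤ) (k : ℕ) : (sweep f c k).cursor = k := by
  induction k generalizing c with
  | zero => rfl
  | succ k ih =>
    simp only [sweep, cursor_mul, cursor_lamp, cursor_ofPos, ih]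
    omega

lemma lampAt_sweep (f : ℤ → G) (c : ℤ) (k : ℕ) (z : ℤ) :
    (sweep f c k).lampAt z = if 0 ≤ z ∧ z < k then f (c + z) else 1 := by
  induction k generalizing c z with
  | zero => simp only [sweep, lampAt_one]; rw [if_neg (by omega)]
  | succ k ih =>
    simp only [sweep, lampAt_mul, lampAt_lamp, lampAt_ofPos, cursor_mul, cursor_lamp,
      cursor_ofPos, ih, mul_one]
    by_cases hz : z = 0
    · simp [hz]
    · rw [if_neg hz, one_mul]
      split_ifs <;> first | omega | ring_nf

lemma wordLengthLE_ofPos (k : ℤ) :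
    WordLengthLE (wreathGens S zGens) (ofPos (ofAdd k)) k.natAbs := by
  have hgen : ∀ ε : ℤ, ε = 1 ∨ ε = -1 → ofPos (ofAdd ε) ∈ wreathGens S zGens := fun ε hε =>
    mem_wreathGens_zGens_iff.mpr (by rcases hε with rfl | rfl <;> simp)
  induction k using Int.induction_on with
  | zero => exact WordLengthLE.one
  | succ i ih =>
    rw [ofAdd_add, map_mul]
    exact (ih.mul (.of_mem (hgen 1 (.inl rfl)))).mono (by omega)
  | pred i ih =>
    rw [sub_eq_add_neg, ofAdd_add, map_mul]
    exact (ih.mul (.of_mem (hgen (-1) (.inr rfl)))).mono (by omega)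

lemma wordLengthLE_lamp (hS : Submonoid.closure S = ⊤) (s : G) :
    WordLengthLE (wreathGens S zGens) (lamp s) (wordDist S 1 s) := by
  simpa using (wordLengthLE_wordDist hS 1 s).map lamp fun s hs =>
    mem_wreathGens_iff.mpr (.inr ⟨s, hs, rfl⟩)

lemma wordLengthLE_sweep (hS : Submonoid.closure S = ⊤) (f : ℤ → G) (c : ℤ) (k : ℕ) :
    WordLengthLE (wreathGens S zGens) (sweep f c k)
      (k + ∑ i ∈ Finset.range k, wordDist S 1 (f (c + i))) := by
  induction k generalizing c with
  | zero => exact WordLengthLE.one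
  | succ k ih =>
    have hgen : ofPos (ofAdd 1) ∈ wreathGens S zGens := mem_wreathGens_zGens_iff.mpr (by simp)
    refine (((wordLengthLE_lamp hS (f c)).mul (.of_mem hgen)).mul (ih (c + 1))).mono ?_
    rw [Finset.sum_range_succ']
    simp only [Nat.cast_add, Nat.cast_one, Nat.cast_zero, add_zero, add_assoc,
      add_comm (1 : ℤ)]
    omega

lemma toNat_sub_le_rightDist_of_Ico_subset {u v : Wreath G (Multiplicative ℤ)} {a b : ℤ}
    (h : Set.Ico a b ⊆ rightDiff u v) : (b - a).toNat ≤ rightDist u v :=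
  Set.ncard_Ico_int a b ▸ Set.ncard_le_ncard h (rightDiff_finite u v)

lemma natAbs_cursor_le_rightDist (w : Wreath G (Multiplicative ℤ)) :
    w.cursor.natAbs ≤ rightDist 1 w := by
  have := toNat_sub_le_rightDist_of_Ico_subset (u := 1) (v := w) (a := min 0 w.cursor) (b := max 0 w.cursor)
    fun t ht h => by
      simp only [Set.mem_Ico] at ht
      have := (rightProfile_eq_iff.mp h).1
      simp only [cursor_one] at this
      omega
  omega

lemma le_max_add_rightDist_of_lampAt_ne_one {w : Wreath G (Multiplicative ℤ)} {z : ℤ}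
    (hz : w.lampAt z ≠ 1) :
    z ≤ max 0 w.cursor + rightDist 1 w := by
  have := toNat_sub_le_rightDist_of_Ico_subset (u := 1) (v := w) (a := max 0 w.cursor) (b := z)
    fun t ht h => by
      simp only [Set.mem_Ico] at ht
      exact hz ((rightProfile_eq_iff.mp h).2 (by simp; omega) z ht.2).symm
  omega

lemma min_sub_leftDist_le_of_lampAt_ne_one {w : Wreath G (Multiplicative ℤ)} {z : ℤ}
    (hz : w.lampAt z ≠ 1) :
    min 0 w.cursor - leftDist 1 w ≤ z := by
  have := le_max_add_rightDist_of_lampAt_ne_one (w := reflect w) (z := -z) (by simpa using hz)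
  simp only [cursor_reflect, leftDist, map_one] at this ⊢
  omega

lemma wordLengthLE_wreath (hS : Submonoid.closure S = ⊤) (w : Wreath G (Multiplicative ℤ)) :
    WordLengthLE (wreathGens S zGens) w
      (5 * rightDist 1 w + 2 * leftDist 1 w + lampDist S 1 w + 2) := by
  set ℓ := min 0 w.cursor - leftDist 1 w
  set k := (max 0 w.cursor + rightDist 1 w - ℓ + 1).toNat
  have hsupp : ∀ z, w.lampAt z ≠ 1 → ℓ ≤ z ∧ z < ℓ + k := fun z hz =>
    ⟨min_sub_leftDist_le_of_lampAt_ne_one hz,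
      by have := le_max_add_rightDist_of_lampAt_ne_one hz; omega⟩
  have hdecomp : w = ofPos (ofAdd ℓ) * sweep w.lampAt ℓ k * ofPos (ofAdd (w.cursor - ℓ - k)) := by
    refine ext_lampAt (fun z => ?_) (by simp only [cursor_mul, cursor_ofPos, cursor_sweep]; ring)
    simp only [lampAt_mul, lampAt_ofPos, cursor_ofPos, lampAt_sweep, one_mul, mul_one]
    split_ifs with h
    · simp
    · by_contra hz
      have := hsupp z hz
      omega
  have hsum : ∑ i ∈ Finset.range k, wordDist S 1 (w.lampAt (ℓ + i)) = lampDist S 1 w := by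
    rw [lampDist, finsum_lampAt_eq_sum _ wordDist_self
      (T := (Finset.range k).image fun i : ℕ => ℓ + i), Finset.sum_image (by simp)]
    · simp
    · intro z hz
      obtain ⟨h₁, h₂⟩ := hsupp z (Ne.symm hz)
      exact Finset.mem_image.mpr ⟨(z - ℓ).toNat, by simp; omega, by omega⟩
  have hword := ((wordLengthLE_ofPos ℓ).mul (wordLengthLE_sweep hS w.lampAt ℓ k)).mul
    (wordLengthLE_ofPos (S := S) (w.cursor - ℓ - k))
  rw [← hdecomp] at hword
  refine hword.mono ?_
  have := natAbs_cursor_le_rightDist w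
  rw [hsum]
  omega

lemma closure_wreathGens_eq_top (hS : Submonoid.closure S = ⊤) :
    Submonoid.closure (wreathGens S zGens) = ⊤ :=
  eq_top_iff.mpr fun w _ => (wordLengthLE_wreath hS w).mem_closure

lemma rightDist_le_wordDist (hS : Submonoid.closure S = ⊤) (u v : Wreath G (Multiplicative ℤ)) :
    rightDist u v ≤ wordDist (wreathGens S zGens) u v := by
  simpa using le_wordDist_of_lipschitz (closure_wreathGens_eq_top hS) (rightDist u)
    (fun v _ hσ => rightDist_mul_le hσ u v) u v

lemma leftDist_le_wordDist (hS : Submonoid.closure S = ⊤) (u v : Wreath G (Multiplicative ℤ)) :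
    leftDist u v ≤ wordDist (wreathGens S zGens) u v := by
  simpa using le_wordDist_of_lipschitz (closure_wreathGens_eq_top hS) (leftDist u)
    (fun v _ hσ => leftDist_mul_le hσ u v) u v

lemma lampDist_le_wordDist (hS : Submonoid.closure S = ⊤) (u v : Wreath G (Multiplicative ℤ)) :
    lampDist S u v ≤ wordDist (wreathGens S zGens) u v := by
  simpa using le_wordDist_of_lipschitz (closure_wreathGens_eq_top hS) (lampDist S u)
    (fun v _ hσ => lampDist_mul_le hS hσ u v) u v

lemma eq_of_rightDist_eq_zero_of_lampDist_eq_zero (hS : Submonoid.closure S = ⊤)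
    {u v : Wreath G (Multiplicative ℤ)} (hright : rightDist u v = 0)
    (hlamp : lampDist S u v = 0) : u = v := by
  refine ext_lampAt (fun z => eq_of_wordDist_eq_zero hS (Nat.le_zero.mp ?_)) ?_
  · refine (single_le_finsum (f := fun z => wordDist S (u.lampAt z) (v.lampAt z)) z
      ((finite_setOf_lampAt_ne u v).subset fun z hz h => ?_) fun _ => Nat.zero_le _).trans
      hlamp.le
    simp [h] at hz
  · by_contra hne
    have hmem : min u.cursor v.cursor ∈ rightDiff u v := fun h => by
      have := (rightProfile_eq_iff.mp h).1
      omega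
    exact (Set.ncard_pos (rightDiff_finite u v)).mpr ⟨_, hmem⟩ |>.ne' hright

lemma wordDist_le_seven_mul (hS : Submonoid.closure S = ⊤) (u v : Wreath G (Multiplicative ℤ)) :
    wordDist (wreathGens S zGens) u v ≤ 7 * (rightDist u v + leftDist u v + lampDist S u v) := by
  by_cases h : rightDist u v + leftDist u v + lampDist S u v = 0
  · rw [eq_of_rightDist_eq_zero_of_lampDist_eq_zero hS (by omega) (by omega : lampDist S u v = 0)]
    simp
  · have h' := wordDist_le (wordLengthLE_wreath hS (u⁻¹ * v))
    rw [← inv_mul_cancel u, rightDist_mul_left, leftDist_mul_left, lampDist_mul_left] at h'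
    omega

lemma lampDist_eq_sum (u v : Wreath G (Multiplicative ℤ)) :
    lampDist S u v = ∑ z ∈ (finite_setOf_lampAt_ne u v).toFinset,
      wordDist S (u.lampAt z) (v.lampAt z) :=
  finsum_lampAt_eq_sum _ wordDist_self fun z hz => by simpa using hz

lemma mul_lampDist_le_sum {ψ : G → G → ℝ} {c : ℝ}
    (h : ∀ x y, c * wordDist S x y ≤ ψ x y) (u v : Wreath G (Multiplicative ℤ)) :
    c * lampDist S u v ≤
      ∑ z ∈ (finite_setOf_lampAt_ne u v).toFinset, ψ (u.lampAt z) (v.lampAt z) := by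
  rw [lampDist_eq_sum, Nat.cast_sum, Finset.mul_sum]
  exact Finset.sum_le_sum fun z _ => h _ _

lemma sum_le_mul_lampDist {ψ : G → G → ℝ} {C : ℝ}
    (h : ∀ x y, ψ x y ≤ C * wordDist S x y) (u v : Wreath G (Multiplicative ℤ)) :
    ∑ z ∈ (finite_setOf_lampAt_ne u v).toFinset, ψ (u.lampAt z) (v.lampAt z) ≤
      C * lampDist S u v := by
  rw [lampDist_eq_sum, Nat.cast_sum, Finset.mul_sum]
  exact Finset.sum_le_sum fun z _ => h _ _

lemma isL1Embeddable_rightDist [Countable G] :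
    IsL1Embeddable fun u v : Wreath G (Multiplicative ℤ) => 2 * (rightDist u v : ℝ≥0∞) := by
  classical
  -- lamps are encoded in `ℕ` so that the profiles live in `Type`, as `IsL1Embeddable` requires
  obtain ⟨e, he⟩ := Countable.exists_injective_nat G
  let φ (t : ℤ) (u : Wreath G (Multiplicative ℤ)) : Option (Set.Ioi t → ℕ) :=
    (rightProfile t u).map (e ∘ ·)
  have hφ : ∀ t u v, φ t u = φ t v ↔ rightProfile t u = rightProfile t v := fun t u v =>
    (Option.map_injective he.comp_left).eq_iff
  have key : ∀ u v, ∑' t, (if φ t u = φ t v then 0 else 2) = 2 * (rightDist u v : ℝ≥0∞) :=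
    fun u v => by
      have hfin := rightDiff_finite u v
      rw [tsum_eq_sum (s := hfin.toFinset) fun t ht => if_pos ((hφ t u v).mpr (by
        simpa [rightDiff] using ht)), Finset.sum_congr rfl fun t ht => if_neg (by
        rw [hφ]; simpa [rightDiff] using ht), Finset.sum_const, nsmul_eq_mul, rightDist,
        Set.ncard_eq_toFinset_card _ hfin, mul_comm]
  simpa only [key] using IsL1Embeddable.tsum (fun t => isL1Embeddable_discrete (φ t))
    fun u v => by rw [key]; finiteness

lemma isL1Embeddable_lamps {Ω₀ : Type} [MeasurableSpace Ω₀] {μ₀ : Measure Ω₀}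
    (f : G → Lp ℝ 1 μ₀) : IsL1Embeddable fun u v : Wreath G (Multiplicative ℤ) =>
      ∑' z, ‖f (u.lampAt z) - f (v.lampAt z)‖ₑ := by
  refine IsL1Embeddable.tsum (ι := ℤ) (X := Wreath G (Multiplicative ℤ))
    (fun z => IsL1Embeddable.comp (d := fun x y => ‖f x - f y‖ₑ) (IsL1Embeddable.of_lp f)
      fun u : Wreath G (Multiplicative ℤ) => u.lampAt z) fun u v => ?_
  rw [tsum_eq_sum (s := (finite_setOf_lampAt_ne u v).toFinset) fun z hz => ?_]
  · exact ENNReal.sum_ne_top.mpr fun _ _ => enorm_ne_top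
  · rw [show u.lampAt z = v.lampAt z by simpa using hz, sub_self, enorm_zero]

lemma exists_lp_embedding [Countable G] {Ω₀ : Type} [MeasurableSpace Ω₀] {μ₀ : Measure Ω₀}
    (f : G → Lp ℝ 1 μ₀) :
    ∃ (Ω : Type) (_ : MeasurableSpace Ω) (μ : Measure Ω)
      (F : Wreath G (Multiplicative ℤ) → Lp ℝ 1 μ), ∀ u v,
        ‖F u - F v‖ = 2 * rightDist u v + 2 * leftDist u v +
          ∑ z ∈ (finite_setOf_lampAt_ne u v).toFinset, ‖f (u.lampAt z) - f (v.lampAt z)‖ := by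
  obtain ⟨Ω, m, μ, F, hF⟩ := (isL1Embeddable_rightDist.add
    (isL1Embeddable_rightDist.comp reflect)).add (isL1Embeddable_lamps f)
  refine ⟨Ω, m, μ, F, fun u v => ?_⟩
  have hFuv := hF u v
  simp only at hFuv
  rw [← toReal_enorm, hFuv, tsum_eq_sum (s := (finite_setOf_lampAt_ne u v).toFinset)
    fun z hz => by rw [show u.lampAt z = v.lampAt z by simpa using hz, sub_self, enorm_zero]]
  rw [ENNReal.toReal_add (by finiteness) (ENNReal.sum_ne_top.mpr fun _ _ => enorm_ne_top),
    ENNReal.toReal_add (by finiteness) (by finiteness), ENNReal.toReal_sum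
    fun _ _ => enorm_ne_top]
  simp [leftDist]

end Wreath

/-- If a finitely generated group `G` admits a bi-Lipschitz embedding into
`L₁`, then so does `G ≀ ℤ` (with the word metric from its canonical generating set). -/
theorem wreath_Z_biLipschitz_L1
    {G : Type*} [Group G] (S : Finset G) (hS : IsSymmGenSet (S : Set G))
    (h : ∃ (Ω : Type) (_ : MeasurableSpace Ω) (μ : Measure Ω) (f : G → Lp ℝ 1 μ) (c C : ℝ),
      0 < c ∧ 0 < C ∧ ∀ x y : G,
        c * (wordDist (S : Set G) x y : ℝ) ≤ ‖f x - f y‖ ∧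
        ‖f x - f y‖ ≤ C * (wordDist (S : Set G) x y : ℝ)) :
    ∃ (Ω : Type) (_ : MeasurableSpace Ω) (μ : Measure Ω)
      (F : Wreath G (Multiplicative ℤ) → Lp ℝ 1 μ) (c C : ℝ),
      0 < c ∧ 0 < C ∧ ∀ u v : Wreath G (Multiplicative ℤ),
        c * (wordDist (wreathGens (S : Set G) zGens) u v : ℝ) ≤ ‖F u - F v‖ ∧
        ‖F u - F v‖ ≤ C * (wordDist (wreathGens (S : Set G) zGens) u v : ℝ) := by
  obtain ⟨Ω₀, _, μ₀, f, c, C, hc, hC, hf⟩ := h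
  have hS' := hS.closure_eq_top
  have : Countable G := countable_of_closure_eq_top hS'
  obtain ⟨Ω, _, μ, F, hF⟩ := Wreath.exists_lp_embedding f
  refine ⟨Ω, _, μ, F, min 2 c / 7, 4 + C, by positivity, by positivity, fun u v => ?_⟩
  have hd : (wordDist (wreathGens (S : Set G) zGens) u v : ℝ) ≤ 7 * (Wreath.rightDist u v +
      Wreath.leftDist u v + Wreath.lampDist (S : Set G) u v) := by
    exact_mod_cast Wreath.wordDist_le_seven_mul hS' u v
  set d := (wordDist (wreathGens (S : Set G) zGens) u v : ℝ)
  have hA : (Wreath.rightDist u v : ℝ) ≤ d := Nat.cast_le.mpr (Wreath.rightDist_le_wordDist hS' u v)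
  have hB : (Wreath.leftDist u v : ℝ) ≤ d := Nat.cast_le.mpr (Wreath.leftDist_le_wordDist hS' u v)
  have hL : (Wreath.lampDist (S : Set G) u v : ℝ) ≤ d :=
    Nat.cast_le.mpr (Wreath.lampDist_le_wordDist hS' u v)
  have hlow := Wreath.mul_lampDist_le_sum (fun x y => (hf x y).1) u v
  have hup := Wreath.sum_le_mul_lampDist (fun x y => (hf x y).2) u v
  have hm₁ := min_le_left 2 c
  have hm₂ := min_le_right 2 c
  rw [hF]
  constructor
  · nlinarith [mul_le_mul_of_nonneg_left hd (lt_min two_pos hc).le]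
  · nlinarith
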